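/- Let ρ > 0, let β̂^{en} minimize the elastic net objective G(β) = (1/2)Σ_{i=1}^n (y_i − x_i'β)² + λ‖β‖₁ + (ρ/2)‖β‖₂², let J₀ = {j : β̂^{en}_j ≠ 0}, and let v = Σ_{i=1}^n (y_i − x_i'β̂^{en})x_i − ρβ̂^{en} be the dual vector. Assume max_{j∉J₀}|v_j| < λ. Let M = nΣ̂_{J₀} + ρI (which is invertible), and define η^{en}(0) = M^{-1}x_{n+1,J₀}/(1 + x_{n+1,J₀}'M^{-1}x_{n+1,J₀}), γ^{en}(0) = (x_{n+1,J₀^c} − nΣ̂_{J₀^c,J₀}M^{-1}x_{n+1,J₀})/(1 + x_{n+1,J₀}'M^{-1}x_{n+1,J₀}), and t₁ = min_{j∈J₀}(−β̂^{en}_j/η^{en}_j(0))₊₊ ∧ min_{j∈J₀^c}((sign(γ^{en}_j(0))λ − v_j)/γ^{en}_j(0))₊₊. Then for every t ∈ [0, t₁], the vector β(t) defined by β(t)_{J₀} = β̂^{en}_{J₀} + t·η^{en}(0), β(t)_{J₀^c} = 0, is the unique minimizer of the augmented elastic net objective G(β) + (1/2)(x_{n+1}'β̂^{en} + t − x_{n+1}'β)².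 That is, the piecewise linear perturb-one homotopy holds for the elastic net with nΣ̂_{J} replaced by nΣ̂_{J} + ρI. -/

import Mathlib

open scoped BigOperators Matrix

noncomputable section

/-- Euclidean inner product on `Fin p → ℝ`. -/
def dotp {p : ℕ} (a b : Fin p → ℝ) : ℝ := ∑ j, a j * b j

/-- The elastic net objective
`G(β) = (1/2)∑ᵢ (yᵢ − xᵢ'β)² + λ‖β‖₁ + (ρ/2)‖β‖₂²`. -/
def enObj {n p : ℕ} (x : Fin n → Fin p → ℝ) (y : Fin n → ℝ) (lam ρ : ℝ)
    (β : Fin p → ℝ) : ℝ :=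
  (1 / 2) * ∑ i, (y i - dotp (x i) β) ^ 2 + lam * ∑ j, |β j| + (ρ / 2) * ∑ j, (β j) ^ 2

/-- The augmented elastic net objective with `(x_{n+1}, ynew)` added as the `(n+1)`-th sample. -/
def enAug {n p : ℕ} (x : Fin n → Fin p → ℝ) (y : Fin n → ℝ) (xnew : Fin p → ℝ)
    (lam ρ : ℝ) (ynew : ℝ) (β : Fin p → ℝ) : ℝ :=
  enObj x y lam ρ β + (1 / 2) * (ynew - dotp xnew β) ^ 2

/-- The subvector `u_J` of `u` with coordinates in `J`. -/
def subv {p : ℕ} (u : Fin p → ℝ) (J : Finset (Fin p)) : ↥J → ℝ := fun a => u a.1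

/-- The matrix `M = nΣ̂_J + ρI = (∑ᵢ x_{i,J}x_{i,J}') + ρI`. -/
def enMat {n p : ℕ} (x : Fin n → Fin p → ℝ) (ρ : ℝ) (J : Finset (Fin p)) :
    Matrix ↥J ↥J ℝ :=
  Matrix.of fun a b => (∑ i, x i a.1 * x i b.1) + if a = b then ρ else 0

/-- `M⁻¹ x_{n+1,J}` where `M = nΣ̂_J + ρI`. -/
def enInvPart {n p : ℕ} (x : Fin n → Fin p → ℝ) (ρ : ℝ) (J : Finset (Fin p))
    (xnew : Fin p → ℝ) : ↥J → ℝ :=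
  (enMat x ρ J)⁻¹ *ᵥ subv xnew J

/-- The denominator `1 + x_{n+1,J}'M⁻¹x_{n+1,J}`. -/
def enDenom {n p : ℕ} (x : Fin n → Fin p → ℝ) (ρ : ℝ) (J : Finset (Fin p))
    (xnew : Fin p → ℝ) : ℝ :=
  1 + subv xnew J ⬝ᵥ enInvPart x ρ J xnew

/-- The elastic net slope vector `ηᵉⁿ(0) = M⁻¹x_{n+1,J}/(1 + x_{n+1,J}'M⁻¹x_{n+1,J})`,
extended by `0` off `J`. -/
def enEta {n p : ℕ} (x : Fin n → Fin p → ℝ) (ρ : ℝ) (J : Finset (Fin p))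
    (xnew : Fin p → ℝ) : Fin p → ℝ := fun j =>
  if h : j ∈ J then enInvPart x ρ J xnew ⟨j, h⟩ / enDenom x ρ J xnew else 0

/-- The elastic net dual slope vector
`γᵉⁿ(0) = (x_{n+1,J^c} − nΣ̂_{J^c,J}M⁻¹x_{n+1,J})/(1 + x_{n+1,J}'M⁻¹x_{n+1,J})`. -/
def enGamma {n p : ℕ} (x : Fin n → Fin p → ℝ) (ρ : ℝ) (J : Finset (Fin p))
    (xnew : Fin p → ℝ) : Fin p → ℝ := fun j =>
  (xnew j - ∑ a : ↥J, (∑ i, x i j * x i a.1) * enInvPart x ρ J xnew a) / enDenom x ρ J xnew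

/-- `rpp a b` is `(a/b)₊₊ ∈ EReal`, the ratio `a/b` computed with the conventions `0/0 = 0`,
`z/0 = sign(z)·∞`, followed by `(z)₊₊ = z` if `z > 0` and `+∞` if `z ≤ 0`. -/
def rpp (a b : ℝ) : EReal := if b ≠ 0 ∧ 0 < a / b then ((a / b : ℝ) : EReal) else ⊤

/-- The first point of change for the elastic net homotopy:
`t₁ = min_{j∈J}(−β̂ᵉⁿ_j/ηᵉⁿ_j(0))₊₊ ∧ min_{j∈J^c}((sign(γᵉⁿ_j(0))λ − v_j)/γᵉⁿ_j(0))₊₊`. -/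
def enTOne {n p : ℕ} (x : Fin n → Fin p → ℝ) (ρ : ℝ) (J : Finset (Fin p))
    (xnew : Fin p → ℝ) (βen v : Fin p → ℝ) (lam : ℝ) : EReal :=
  (J.inf fun j => rpp (-(βen j)) (enEta x ρ J xnew j)) ⊓
    (Jᶜ.inf fun j => rpp (Real.sign (enGamma x ρ J xnew j) * lam - v j) (enGamma x ρ J xnew j))

/-- The elastic net homotopy solution: `β(t)_{J} = β̂ᵉⁿ_J + t·ηᵉⁿ(0)`, `β(t)_{J^c} = 0`. -/
def enBetaT {n p : ℕ} (x : Fin n → Fin p → ℝ) (ρ : ℝ) (J : Finset (Fin p))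
    (xnew : Fin p → ℝ) (βen : Fin p → ℝ) (t : ℝ) : Fin p → ℝ := fun j =>
  if j ∈ J then βen j + t * enEta x ρ J xnew j else 0

/-! The augmented objective is `ρ`-strongly convex, so any point at which a subgradient of it
vanishes is its unique minimizer.  Along `β(t) = β̂ + t η` the negative gradient of the smooth part
moves linearly in `t`: the new sample contributes the residual `t / D`, where
`D = 1 + x_{n+1,J₀}'M⁻¹x_{n+1,J₀}`, and the Gram equation
`M (D η) = x_{n+1,J₀}` makes the correlation stay at `v_j = λ sign β̂_j` on `J₀` and equal
`v_j + t γ_j` off `J₀`.  The bound `t ≤ t₁` is exactly what keeps `β(t)_j` from changing sign on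
`J₀` and `|v_j + t γ_j| ≤ λ` off `J₀`.  The values `v_j = λ sign β̂_j` come from differentiating
`G` along a coordinate where `β̂_j ≠ 0`, at which `|·|` is smooth. -/

theorem Finset.sum_univ_dite_mem {ι M : Type*} [Fintype ι] [DecidableEq ι] [AddCommMonoid M]
    (J : Finset ι) (f : J → M) : ∑ k, (if h : k ∈ J then f ⟨k, h⟩ else 0) = ∑ a : J, f a := by
  rw [← Finset.sum_subset (Finset.subset_univ J) (fun k _ hk => dif_neg hk),
    ← Finset.sum_coe_sort J]
  exact Finset.sum_congr rfl fun a _ => dif_pos a.2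

theorem Finset.sum_apply_update {ι α M : Type*} [Fintype ι] [DecidableEq ι] [AddCommGroup M]
    (h : ι → α → M) (β : ι → α) (j : ι) (c : α) :
    ∑ k, h k (Function.update β j c k) = ∑ k, h k (β k) + (h j c - h j (β j)) := by
  simp only [Function.apply_update h β j c, Finset.sum_update_of_mem (Finset.mem_univ j),
    Finset.sdiff_singleton_eq_erase]
  rw [← Finset.add_sum_erase _ (fun k => h k (β k)) (Finset.mem_univ j)]
  abel

theorem isMin_and_unique_of_quadratic_growth {ι : Type*} [Fintype ι] {f : (ι → ℝ) → ℝ}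
    {b : ι → ℝ} {c : ℝ} (hc : 0 < c) (hgrowth : ∀ β, f b + c * ∑ j, (β j - b j) ^ 2 ≤ f β) :
    (∀ β, f b ≤ f β) ∧ ∀ b', (∀ β, f b' ≤ f β) → b' = b := by
  have hsq : ∀ β : ι → ℝ, 0 ≤ ∑ j, (β j - b j) ^ 2 := fun β =>
    Finset.sum_nonneg fun j _ => sq_nonneg _
  refine ⟨fun β => by nlinarith [hgrowth β, hsq β], fun b' hb' => ?_⟩
  have hzero : ∑ j, (b' j - b j) ^ 2 = 0 :=
    le_antisymm (by nlinarith [hgrowth b', hb' b]) (hsq b')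
  funext j
  have := (Finset.sum_eq_zero_iff_of_nonneg fun k _ => sq_nonneg (b' k - b k)).1 hzero j
    (Finset.mem_univ j)
  exact sub_eq_zero.1 (pow_eq_zero_iff two_ne_zero |>.1 this)

theorem dotp_eq_dotProduct {p : ℕ} (a b : Fin p → ℝ) : dotp a b = a ⬝ᵥ b := rfl

section Objective

variable {n p : ℕ} (x : Fin n → Fin p → ℝ) (y : Fin n → ℝ) (lam ρ : ℝ)

theorem enAug_eq_enObj_snoc (xnew : Fin p → ℝ) (ynew : ℝ) (β : Fin p → ℝ) :
    enAug x y xnew lam ρ ynew β =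
      enObj (Fin.snoc x xnew : Fin (n + 1) → Fin p → ℝ) (Fin.snoc y ynew) lam ρ β := by
  simp only [enAug, enObj, Fin.sum_univ_castSucc, Fin.snoc_castSucc, Fin.snoc_last]
  ring

theorem sum_snoc_residual_mul (xnew : Fin p → ℝ) (ynew : ℝ) (β : Fin p → ℝ) (j : Fin p) :
    ∑ i : Fin (n + 1), (Fin.snoc (α := fun _ => ℝ) y ynew i -
        dotp (Fin.snoc (α := fun _ => Fin p → ℝ) x xnew i) β) *
          Fin.snoc (α := fun _ => Fin p → ℝ) x xnew i j =
      ∑ i, (y i - dotp (x i) β) * x i j + (ynew - dotp xnew β) * xnew j := by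
  simp only [Fin.sum_univ_castSucc, Fin.snoc_castSucc, Fin.snoc_last]

theorem enObj_add_le_of_subgradient (hlam : 0 ≤ lam) {b s : Fin p → ℝ}
    (hs : ∀ j, |s j| ≤ 1) (hsb : ∀ j, s j * b j = |b j|)
    (hgrad : ∀ j, ∑ i, (y i - dotp (x i) b) * x i j - ρ * b j = lam * s j) (β : Fin p → ℝ) :
    enObj x y lam ρ b + ρ / 2 * ∑ j, (β j - b j) ^ 2 ≤ enObj x y lam ρ β := by
  set δ := β - b with hδ
  have hcross : ∑ i, (y i - dotp (x i) b) * dotp (x i) δ =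
      ∑ j, (lam * s j + ρ * b j) * δ j := by
    have hδi : ∀ i, dotp (x i) δ = ∑ j, x i j * δ j := fun i => rfl
    simp only [hδi, Finset.mul_sum]
    rw [Finset.sum_comm]
    refine Finset.sum_congr rfl fun j _ => ?_
    rw [show lam * s j + ρ * b j = ∑ i, (y i - dotp (x i) b) * x i j by linarith [hgrad j],
      Finset.sum_mul]
    exact Finset.sum_congr rfl fun i _ => by ring
  have hsample : ∀ i, (y i - dotp (x i) b) ^ 2 / 2 - (y i - dotp (x i) b) * dotp (x i) δ ≤
      (y i - dotp (x i) β) ^ 2 / 2 := by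
    intro i
    have : dotp (x i) β = dotp (x i) b + dotp (x i) δ := by
      simp only [dotp_eq_dotProduct, hδ, dotProduct_sub]; ring
    rw [this]
    nlinarith [sq_nonneg (dotp (x i) δ)]
  have hcoord : ∀ j, lam * |b j| + ρ / 2 * b j ^ 2 + (lam * s j + ρ * b j) * δ j +
      ρ / 2 * (β j - b j) ^ 2 ≤ lam * |β j| + ρ / 2 * β j ^ 2 := by
    intro j
    have hsβ : s j * β j ≤ |β j| := calc
      s j * β j ≤ |s j| * |β j| := by rw [← abs_mul]; exact le_abs_self _
      _ ≤ |β j| := mul_le_of_le_one_left (abs_nonneg _) (hs j)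
    rw [← hsb j, hδ, Pi.sub_apply]
    nlinarith [mul_le_mul_of_nonneg_left hsβ hlam]
  have h1 := Finset.sum_le_sum fun i (_ : i ∈ Finset.univ) => hsample i
  have h2 := Finset.sum_le_sum fun j (_ : j ∈ Finset.univ) => hcoord j
  simp only [Finset.sum_add_distrib, Finset.sum_sub_distrib, ← Finset.mul_sum,
    ← Finset.sum_div] at h1 h2
  rw [hcross] at h1
  unfold enObj
  linarith

theorem enObj_update (β : Fin p → ℝ) (j : Fin p) (ε : ℝ) :
    enObj x y lam ρ (Function.update β j (β j + ε)) =
      enObj x y lam ρ β + ε * (ρ * β j - ∑ i, (y i - dotp (x i) β) * x i j) +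
        ε ^ 2 * ((∑ i, x i j ^ 2 + ρ) / 2) + lam * (|β j + ε| - |β j|) := by
  have hdot : ∀ a : Fin p → ℝ,
      dotp a (Function.update β j (β j + ε)) = dotp a β + a j * ε := by
    intro a
    rw [dotp, Finset.sum_apply_update (fun k c => a k * c)]
    simp only [dotp]
    ring
  simp only [enObj, hdot, Finset.sum_apply_update (fun _ c => |c|),
    Finset.sum_apply_update (fun _ c => c ^ 2)]
  have hres : ∀ i, (y i - (dotp (x i) β + x i j * ε)) ^ 2 =
      (y i - dotp (x i) β) ^ 2 - 2 * ε * ((y i - dotp (x i) β) * x i j) + ε ^ 2 * x i j ^ 2 :=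
    fun i => by ring
  simp only [hres, Finset.sum_add_distrib, Finset.sum_sub_distrib, ← Finset.mul_sum]
  ring

theorem enObj_kkt_of_ne_zero {βen : Fin p → ℝ}
    (hmin : ∀ β, enObj x y lam ρ βen ≤ enObj x y lam ρ β) {j : Fin p} (hj : βen j ≠ 0) :
    ∑ i, (y i - dotp (x i) βen) * x i j - ρ * βen j = lam * SignType.sign (βen j) := by
  set A := ρ * βen j - ∑ i, (y i - dotp (x i) βen) * x i j
  set B := (∑ i, x i j ^ 2 + ρ) / 2
  let φ : ℝ → ℝ := fun ε => enObj x y lam ρ (Function.update βen j (βen j + ε))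
  have hφ : φ = fun ε =>
      enObj x y lam ρ βen + ε * A + ε ^ 2 * B + lam * (|βen j + ε| - |βen j|) :=
    funext fun ε => enObj_update x y lam ρ βen j ε
  have hmin0 : IsLocalMin φ 0 := Filter.Eventually.of_forall fun ε => by
    simpa [φ] using hmin _
  have habs : HasDerivAt (fun ε => |βen j + ε|) (SignType.sign (βen j) : ℝ) 0 := by
    refine HasDerivAt.comp_const_add (βen j) 0 ?_
    simpa using hasDerivAt_abs hj
  have hderiv : HasDerivAt φ (A + lam * SignType.sign (βen j)) 0 := by
    rw [hφ]
    exact (((((hasDerivAt_id (0 : ℝ)).mul_const A).const_add _).add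
      ((hasDerivAt_pow 2 (0 : ℝ)).mul_const B)).add
        ((habs.sub_const |βen j|).const_mul lam)).congr_deriv (by simp)
  have hstationary := hmin0.hasDerivAt_eq_zero hderiv
  linarith

end Objective

section Gram

variable {n p : ℕ} (x : Fin n → Fin p → ℝ) (ρ : ℝ) (J : Finset (Fin p)) (xnew : Fin p → ℝ)

theorem enMat_eq_transpose_mul_add_diagonal :
    enMat x ρ J = (Matrix.of fun i (a : J) => x i a)ᵀ * Matrix.of (fun i (a : J) => x i a) +
      Matrix.diagonal fun _ => ρ := by
  ext a b
  simp [enMat, Matrix.mul_apply, Matrix.diagonal_apply]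

theorem enMat_posSemidef (hρ : 0 ≤ ρ) : (enMat x ρ J).PosSemidef := by
  rw [enMat_eq_transpose_mul_add_diagonal]
  exact (Matrix.posSemidef_conjTranspose_mul_self _).add
    (Matrix.PosSemidef.diagonal fun _ => hρ)

theorem enMat_posDef (hρ : 0 < ρ) : (enMat x ρ J).PosDef := by
  rw [enMat_eq_transpose_mul_add_diagonal]
  exact Matrix.PosDef.posSemidef_add (Matrix.posSemidef_conjTranspose_mul_self _)
    (Matrix.PosDef.diagonal fun _ => hρ)

theorem enMat_mulVec_apply (u : J → ℝ) (a : J) :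
    (enMat x ρ J *ᵥ u) a = ∑ b : J, (∑ i, x i a * x i b) * u b + ρ * u a := by
  simp [enMat, Matrix.mulVec, dotProduct, add_mul, Finset.sum_add_distrib, ite_mul]

theorem enMat_mulVec_enInvPart (hρ : 0 < ρ) :
    enMat x ρ J *ᵥ enInvPart x ρ J xnew = subv xnew J := by
  rw [enInvPart, Matrix.mulVec_mulVec, Matrix.mul_nonsing_inv _
    ((Matrix.isUnit_iff_isUnit_det _).1 (enMat_posDef x ρ J hρ).isUnit), Matrix.one_mulVec]

theorem one_le_enDenom (hρ : 0 ≤ ρ) : 1 ≤ enDenom x ρ J xnew := by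
  have := (enMat_posSemidef x ρ J hρ).inv.dotProduct_mulVec_nonneg (subv xnew J)
  simp only [star_trivial] at this
  rw [enDenom, enInvPart]
  linarith

theorem dotp_enEta (u : Fin p → ℝ) :
    dotp u (enEta x ρ J xnew) =
      (∑ a : J, u a * enInvPart x ρ J xnew a) / enDenom x ρ J xnew := by
  rw [dotp, Finset.sum_div, ← Finset.sum_univ_dite_mem]
  refine Finset.sum_congr rfl fun k _ => ?_
  unfold enEta
  split_ifs <;> simp [mul_div_assoc]

theorem dotp_xnew_enEta :
    dotp xnew (enEta x ρ J xnew) = (enDenom x ρ J xnew - 1) / enDenom x ρ J xnew := by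
  rw [dotp_enEta, enDenom, add_sub_cancel_left]
  rfl

theorem sum_dotp_enEta_mul (j : Fin p) :
    ∑ i, dotp (x i) (enEta x ρ J xnew) * x i j =
      (∑ a : J, (∑ i, x i j * x i a) * enInvPart x ρ J xnew a) / enDenom x ρ J xnew := by
  simp only [dotp_enEta, div_mul_eq_mul_div, ← Finset.sum_div, Finset.sum_mul]
  rw [Finset.sum_comm]
  refine congrArg (· / _) (Finset.sum_congr rfl fun a _ => Finset.sum_congr rfl fun i _ => ?_)
  ring

theorem enGamma_eq (j : Fin p) :
    enGamma x ρ J xnew j =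
      xnew j / enDenom x ρ J xnew - ∑ i, dotp (x i) (enEta x ρ J xnew) * x i j := by
  rw [sum_dotp_enEta_mul, enGamma, sub_div]

theorem enGamma_eq_of_mem (hρ : 0 < ρ) {j : Fin p} (hj : j ∈ J) :
    enGamma x ρ J xnew j = ρ * enEta x ρ J xnew j := by
  have hrow := congrFun (enMat_mulVec_enInvPart x ρ J xnew hρ) ⟨j, hj⟩
  rw [enMat_mulVec_apply] at hrow
  change _ = xnew j at hrow
  rw [enGamma, enEta, dif_pos hj, ← hrow]
  ring

end Gram

theorem mul_le_of_le_rpp {a b t : ℝ} (ht : 0 ≤ t) (h : (t : EReal) ≤ rpp a b) (ha : 0 < a) :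
    t * b ≤ a := by
  rcases le_or_gt b 0 with hb | hb
  · nlinarith
  · rw [rpp, if_pos ⟨hb.ne', div_pos ha hb⟩, EReal.coe_le_coe_iff] at h
    exact (le_div_iff₀ hb).1 h

theorem rpp_neg_neg (a b : ℝ) : rpp (-a) (-b) = rpp a b := by
  simp [rpp, neg_div_neg_eq]

theorem le_mul_of_le_rpp {a b t : ℝ} (ht : 0 ≤ t) (h : (t : EReal) ≤ rpp a b) (ha : a < 0) :
    a ≤ t * b := by
  have := mul_le_of_le_rpp ht (rpp_neg_neg a b ▸ h) (neg_pos.2 ha)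
  linarith

theorem sign_mul_eq_abs_of_le_rpp {b e t : ℝ} (hb : b ≠ 0) (ht : 0 ≤ t)
    (h : (t : EReal) ≤ rpp (-b) e) : (SignType.sign b : ℝ) * (b + t * e) = |b + t * e| := by
  rcases hb.lt_or_gt with hb | hb
  · have := mul_le_of_le_rpp ht h (neg_pos.2 hb)
    rw [sign_neg hb, abs_of_nonpos (by linarith)]
    simp
  · have := le_mul_of_le_rpp ht h (neg_neg_of_pos hb)
    rw [sign_pos hb, abs_of_nonneg (by linarith)]
    simp

theorem abs_add_mul_le_of_le_rpp {v g t lam : ℝ} (ht : 0 ≤ t) (hv : |v| < lam)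
    (h : (t : EReal) ≤ rpp (Real.sign g * lam - v) g) : |v + t * g| ≤ lam := by
  rw [abs_lt] at hv
  rw [abs_le]
  rcases lt_trichotomy g 0 with hg | rfl | hg
  · rw [Real.sign_of_neg hg] at h
    have := le_mul_of_le_rpp ht h (by linarith)
    constructor <;> nlinarith
  · constructor <;> linarith
  · rw [Real.sign_of_pos hg] at h
    have := mul_le_of_le_rpp ht h (by linarith)
    constructor <;> nlinarith

section Path

variable {n p : ℕ} (x : Fin n → Fin p → ℝ) (y : Fin n → ℝ) (ρ : ℝ) (J : Finset (Fin p))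
  (xnew : Fin p → ℝ) {βen : Fin p → ℝ}

theorem enBetaT_eq_add_smul (hβen : ∀ j ∉ J, βen j = 0) (t : ℝ) :
    enBetaT x ρ J xnew βen t = βen + t • enEta x ρ J xnew := by
  ext j
  by_cases hj : j ∈ J
  · simp [enBetaT, hj]
  · simp [enBetaT, enEta, hj, hβen j hj]

theorem enAug_negGradient_enBetaT (hρ : 0 ≤ ρ) (hβen : ∀ j ∉ J, βen j = 0) (t : ℝ) (j : Fin p) :
    ∑ i, (y i - dotp (x i) (enBetaT x ρ J xnew βen t)) * x i j +
        (dotp xnew βen + t - dotp xnew (enBetaT x ρ J xnew βen t)) * xnew j -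
        ρ * enBetaT x ρ J xnew βen t j =
      (∑ i, (y i - dotp (x i) βen) * x i j - ρ * βen j) +
        t * (enGamma x ρ J xnew j - ρ * enEta x ρ J xnew j) := by
  have hD : enDenom x ρ J xnew ≠ 0 := (one_pos.trans_le (one_le_enDenom x ρ J xnew hρ)).ne'
  have hdot : ∀ a, dotp a (βen + t • enEta x ρ J xnew) =
      dotp a βen + t * dotp a (enEta x ρ J xnew) := fun a => by
    simp only [dotp_eq_dotProduct, dotProduct_add, dotProduct_smul, smul_eq_mul]
  rw [enBetaT_eq_add_smul x ρ J xnew hβen, enGamma_eq]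
  simp only [hdot, dotp_xnew_enEta, Pi.add_apply, Pi.smul_apply, smul_eq_mul]
  simp only [sub_add_eq_sub_sub, sub_mul _ (t * _), Finset.sum_sub_distrib, mul_assoc t,
    ← Finset.mul_sum]
  field_simp
  ring

end Path

theorem exists_subgradient_enBetaT {n p : ℕ} (x : Fin n → Fin p → ℝ) (y : Fin n → ℝ)
    (xnew : Fin p → ℝ) {lam ρ : ℝ} (hlam : 0 < lam) (hρ : 0 < ρ) {βen : Fin p → ℝ}
    (hmin : ∀ β, enObj x y lam ρ βen ≤ enObj x y lam ρ β)
    {J₀ : Finset (Fin p)} (hJ₀ : ∀ j, j ∈ J₀ ↔ βen j ≠ 0) {v : Fin p → ℝ}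
    (hv : ∀ j, (∑ i, (y i - dotp (x i) βen) * x i j) - ρ * βen j = v j)
    (hstrict : ∀ j ∉ J₀, |v j| < lam) {t : ℝ} (ht : 0 ≤ t)
    (ht₁ : (t : EReal) ≤ enTOne x ρ J₀ xnew βen v lam) :
    ∃ s : Fin p → ℝ, (∀ j, |s j| ≤ 1) ∧
      (∀ j, s j * enBetaT x ρ J₀ xnew βen t j = |enBetaT x ρ J₀ xnew βen t j|) ∧
      ∀ j, ∑ i, (y i - dotp (x i) (enBetaT x ρ J₀ xnew βen t)) * x i j +
        (dotp xnew βen + t - dotp xnew (enBetaT x ρ J₀ xnew βen t)) * xnew j -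
        ρ * enBetaT x ρ J₀ xnew βen t j = lam * s j := by
  have hβen : ∀ j ∉ J₀, βen j = 0 := fun j hj => not_not.1 (mt (hJ₀ j).2 hj)
  obtain ⟨s, hs⟩ : ∃ s : Fin p → ℝ, ∀ j,
      s j = (v j + t * (enGamma x ρ J₀ xnew j - ρ * enEta x ρ J₀ xnew j)) / lam :=
    ⟨_, fun _ => rfl⟩
  have hs_mem : ∀ j ∈ J₀, s j = SignType.sign (βen j) := fun j hj => by
    have hvj : v j = lam * SignType.sign (βen j) := by
      rw [← hv j, enObj_kkt_of_ne_zero x y lam ρ hmin ((hJ₀ j).1 hj)]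
    rw [hs, hvj, enGamma_eq_of_mem x ρ J₀ xnew hρ hj, sub_self, mul_zero, add_zero,
      mul_div_cancel_left₀ _ hlam.ne']
  have hs_not_mem : ∀ j ∉ J₀, s j = (v j + t * enGamma x ρ J₀ xnew j) / lam := fun j hj => by
    simp [hs, enEta, hj]
  refine ⟨s, fun j => ?_, fun j => ?_, fun j => ?_⟩
  · by_cases hj : j ∈ J₀
    · rcases ((hJ₀ j).1 hj).lt_or_gt with h | h <;> simp [hs_mem j hj, h]
    · rw [hs_not_mem j hj, abs_div, abs_of_pos hlam, div_le_one hlam]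
      exact abs_add_mul_le_of_le_rpp ht (hstrict j hj)
        (ht₁.trans (inf_le_right.trans (Finset.inf_le (Finset.mem_compl.2 hj))))
  · by_cases hj : j ∈ J₀
    · simp only [enBetaT, if_pos hj, hs_mem j hj]
      exact sign_mul_eq_abs_of_le_rpp ((hJ₀ j).1 hj) ht
        (ht₁.trans (inf_le_left.trans (Finset.inf_le hj)))
    · simp [enBetaT, hj]
  · rw [enAug_negGradient_enBetaT x y ρ J₀ xnew hρ.le hβen, hv, hs, mul_div_cancel₀ _ hlam.ne']

/-- Corollary 1 of the paper: the initial piece of the perturb-one homotopy for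
the elastic net.  With `M = nΣ̂_{J₀} + ρI` (which is invertible), dual vector
`v = ∑ᵢ(yᵢ − xᵢ'β̂ᵉⁿ)xᵢ − ρβ̂ᵉⁿ` strictly feasible off the support `J₀`, and `t₁` defined via
`ηᵉⁿ(0)`, `γᵉⁿ(0)`, for every `t ∈ [0, t₁]` the vector `β(t)` with
`β(t)_{J₀} = β̂ᵉⁿ_{J₀} + t·ηᵉⁿ(0)` and `β(t)_{J₀^c} = 0` is the unique minimizer of the
augmented elastic net objective `G(β) + (1/2)(x_{n+1}'β̂ᵉⁿ + t − x_{n+1}'β)²`. -/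
theorem elastic_net_homotopy_initial_piece {n p : ℕ} (x : Fin n → Fin p → ℝ)
    (y : Fin n → ℝ) (xnew : Fin p → ℝ) (lam ρ : ℝ) (hlam : 0 < lam) (hρ : 0 < ρ)
    (βen : Fin p → ℝ)
    (hmin : ∀ β, enObj x y lam ρ βen ≤ enObj x y lam ρ β)
    (J₀ : Finset (Fin p)) (hJ₀ : ∀ j, j ∈ J₀ ↔ βen j ≠ 0)
    (v : Fin p → ℝ)
    (hv : ∀ j, (∑ i, (y i - dotp (x i) βen) * x i j) - ρ * βen j = v j)
    (hstrict : ∀ j ∉ J₀, |v j| < lam) :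
    IsUnit (enMat x ρ J₀) ∧
    ∀ t : ℝ, 0 ≤ t → (t : EReal) ≤ enTOne x ρ J₀ xnew βen v lam →
      (∀ β, enAug x y xnew lam ρ (dotp xnew βen + t) (enBetaT x ρ J₀ xnew βen t) ≤
        enAug x y xnew lam ρ (dotp xnew βen + t) β) ∧
      (∀ b : Fin p → ℝ,
        (∀ β, enAug x y xnew lam ρ (dotp xnew βen + t) b ≤
          enAug x y xnew lam ρ (dotp xnew βen + t) β) → b = enBetaT x ρ J₀ xnew βen t) := by
  refine ⟨(enMat_posDef x ρ J₀ hρ).isUnit, fun t ht ht₁ => ?_⟩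
  obtain ⟨s, hs_abs, hs_mul, hgrad⟩ :=
    exists_subgradient_enBetaT x y xnew hlam hρ hmin hJ₀ hv hstrict ht ht₁
  simp only [enAug_eq_enObj_snoc]
  refine isMin_and_unique_of_quadratic_growth (half_pos hρ)
    (enObj_add_le_of_subgradient _ _ lam ρ hlam.le hs_abs hs_mul fun j => ?_)
  rw [sum_snoc_residual_mul]
  exact hgrad j
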